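/- Let G be a graph in the family 𝓑 constructed from the base graph by k − 1 applications of the operation O_1 (where k ≥ 1), so that G contains exactly k vertex-disjoint copies of K_{2,3}. Then the set consisting of the root of G together with, for each of the k copies of K_{2,3} in G, the two vertices of the partite set of size 2 of that copy, is an independent dominating set of G of minimum cardinality 2k + 1 = i(G). -/

import Mathlib

/-!
Induction along the construction. Suppose `G'` arises from `G` by attaching a copy of `K_{2,3}`
through an edge `v' b`, and let `T` be an independent dominating set of `G'`. Then `T` meets the
copy in at least two vertices (both vertices of the 2-side, or else every vertex of the 3-side other
than `b`), and its trace on `G` is independent and dominates every vertex except possibly `v'`.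
If `v'` is left undominated, then `b ∈ T`, so `T` contains the whole 3-side, and adding `v'` to the
trace costs one vertex. Either way `T` has at least two more vertices than some independent
dominating set of `G`. The base graph needs three vertices, which is checked exhaustively.
-/

namespace PaperIndepDom

open SimpleGraph

/-- The degree of a vertex `v` in a graph `G`. -/
noncomputable def deg {V : Type*} (G : SimpleGraph V) (v : V) : ℕ :=
  (G.neighborSet v).ncard

/-- A set `S` is an independent dominating set of `G`. -/
def IsIDSet {V : Type*} (G : SimpleGraph V) (S : Set V) : Prop :=
  (∀ u ∈ S, ∀ v ∈ S, ¬ G.Adj u v) ∧ ∀ v, v ∉ S → ∃ u ∈ S, G.Adj u v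

/-- The independent domination number `i(G)`. -/
noncomputable def iNum {V : Type*} (G : SimpleGraph V) : ℕ :=
  sInf {n | ∃ S : Set V, IsIDSet G S ∧ S.ncard = n}

/-- The base graph `B₁`: a copy of `K_{2,3}` (vertices `0, 1` forming the partite set of
size 2, vertices `2, 3, 4` forming the partite set of size 3) together with a new root
vertex `5` joined to the degree-2 vertex `2`. -/
def baseGraph : SimpleGraph (Fin 6) :=
  SimpleGraph.fromRel (fun i j =>
    (i.val ≤ 1 ∧ 2 ≤ j.val ∧ j.val ≤ 4) ∨ (i = 2 ∧ j = 5))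

/-- The graph obtained from `G` by adding a vertex-disjoint copy of `K_{2,3}`
(on the vertex set `Fin 2 ⊕ Fin 3`, the `Fin 2` side being the partite set of size 2)
together with an edge joining the vertex `v'` of `G` to the degree-2 vertex `Sum.inr t`
of the added copy of `K_{2,3}` (operation `O₁`). -/
def addK23 {V : Type*} (G : SimpleGraph V) (v' : V) (t : Fin 3) :
    SimpleGraph (V ⊕ (Fin 2 ⊕ Fin 3)) :=
  SimpleGraph.fromRel (fun x y =>
    (∃ a b, G.Adj a b ∧ x = Sum.inl a ∧ y = Sum.inl b) ∨
    (∃ i j, x = Sum.inr (Sum.inl i) ∧ y = Sum.inr (Sum.inr j)) ∨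
    (x = Sum.inl v' ∧ y = Sum.inr (Sum.inr t)))

/-- `FamilyBSet k G S` means that `G ∈ 𝓑` is obtained (up to isomorphism) from the base
graph by `k − 1` applications of the operation `O₁` (so `G` contains exactly `k`
vertex-disjoint copies of `K_{2,3}`), and `S` is the set consisting of the root of `G`
together with, for each of the `k` copies of `K_{2,3}` in `G`, the two vertices of the
partite set of size 2 of that copy. -/
inductive FamilyBSet : ℕ → ∀ {V : Type}, SimpleGraph V → Set V → Prop
  | base : FamilyBSet 1 baseGraph ({0, 1, 5} : Set (Fin 6))
  | extend {k : ℕ} {V : Type} {G : SimpleGraph V} {S : Set V}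
      (hG : FamilyBSet k G S) (v' : V) (hv' : deg G v' ≤ 2) (t : Fin 3) :
      FamilyBSet (k + 1) (addK23 G v' t)
        (Sum.inl '' S ∪ {Sum.inr (Sum.inl 0), Sum.inr (Sum.inl 1)})
  | iso {k : ℕ} {V W : Type} {G : SimpleGraph V} {H : SimpleGraph W} {S : Set V}
      (e : G ≃g H) (hG : FamilyBSet k G S) : FamilyBSet k H (⇑e '' S)

lemma IsIDSet.image_iso {V W : Type*} {G : SimpleGraph V} {H : SimpleGraph W} (e : G ≃g H)
    {S : Set V} (hS : IsIDSet G S) : IsIDSet H (e '' S) := by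
  refine ⟨?_, fun w hw => ?_⟩
  · rintro _ ⟨a, ha, rfl⟩ _ ⟨b, hb, rfl⟩ h
    exact hS.1 a ha b hb (e.map_adj_iff.mp h)
  · obtain ⟨u, hu, h⟩ := hS.2 (e.symm w) fun h => hw ⟨_, h, e.apply_symm_apply w⟩
    exact ⟨e u, Set.mem_image_of_mem e hu, by simpa using e.map_adj_iff.mpr h⟩

lemma iNum_eq_ncard_of_forall_le {V : Type*} {G : SimpleGraph V} {S : Set V}
    (hS : IsIDSet G S) (hmin : ∀ T, IsIDSet G T → S.ncard ≤ T.ncard) : iNum G = S.ncard :=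
  le_antisymm (Nat.sInf_le ⟨S, hS, rfl⟩)
    (le_csInf ⟨_, S, hS, rfl⟩ (by rintro _ ⟨T, hT, rfl⟩; exact hmin T hT))

lemma ncard_preimage_inl_add_ncard_preimage_inr {α β : Type*} [Finite α] [Finite β]
    (T : Set (α ⊕ β)) : (Sum.inl ⁻¹' T).ncard + (Sum.inr ⁻¹' T).ncard = T.ncard := by
  conv_rhs => rw [← Set.image_preimage_inl_union_image_preimage_inr T]
  rw [Set.ncard_union_eq Set.disjoint_image_inl_image_inr,
    Set.ncard_image_of_injective _ Sum.inl_injective,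
    Set.ncard_image_of_injective _ Sum.inr_injective]

section Extension

variable {V : Type*} {G : SimpleGraph V} {v' : V} {t : Fin 3}

@[simp] lemma addK23_adj_inl_inl {a b : V} :
    (addK23 G v' t).Adj (.inl a) (.inl b) ↔ G.Adj a b := by
  simp only [addK23, fromRel_adj, ne_eq, Sum.inl.injEq]
  simp only [↓existsAndEq, and_self, and_comm, true_and, reduceCtorEq, exists_const, false_and,
    or_self, or_false]
  exact ⟨fun h => h.2.elim id G.adj_symm, fun h => ⟨h.ne, .inl h⟩⟩

@[simp] lemma addK23_adj_inl_small {a : V} {i : Fin 2} :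
    ¬ (addK23 G v' t).Adj (.inl a) (.inr (.inl i)) := by
  simp [addK23]

@[simp] lemma addK23_adj_inl_large {a : V} {j : Fin 3} :
    (addK23 G v' t).Adj (.inl a) (.inr (.inr j)) ↔ a = v' ∧ j = t := by
  simp [addK23]

@[simp] lemma addK23_adj_small_small {i i' : Fin 2} :
    ¬ (addK23 G v' t).Adj (.inr (.inl i)) (.inr (.inl i')) := by
  simp [addK23]

@[simp] lemma addK23_adj_small_large {i : Fin 2} {j : Fin 3} :
    (addK23 G v' t).Adj (.inr (.inl i)) (.inr (.inr j)) := by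
  simp only [addK23, fromRel_adj]
  exact ⟨by simp, .inl (.inr (.inl ⟨i, j, rfl, rfl⟩))⟩

@[simp] lemma addK23_adj_large_large {j j' : Fin 3} :
    ¬ (addK23 G v' t).Adj (.inr (.inr j)) (.inr (.inr j')) := by
  simp [addK23]

@[simp] lemma addK23_adj_small_inl {a : V} {i : Fin 2} :
    ¬ (addK23 G v' t).Adj (.inr (.inl i)) (.inl a) :=
  fun h => addK23_adj_inl_small h.symm

@[simp] lemma addK23_adj_large_inl {a : V} {j : Fin 3} :
    (addK23 G v' t).Adj (.inr (.inr j)) (.inl a) ↔ a = v' ∧ j = t := by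
  rw [adj_comm, addK23_adj_inl_large]

@[simp] lemma addK23_adj_large_small {i : Fin 2} {j : Fin 3} :
    (addK23 G v' t).Adj (.inr (.inr j)) (.inr (.inl i)) :=
  addK23_adj_small_large.symm

lemma isIDSet_addK23 {S : Set V} (hS : IsIDSet G S) :
    IsIDSet (addK23 G v' t) (Sum.inl '' S ∪ {.inr (.inl 0), .inr (.inl 1)}) := by
  refine ⟨?_, ?_⟩
  · rintro (a | i | j) ha (b | i' | j') hb hadj <;> simp at ha hb hadj
    exact hS.1 a ha b hb hadj
  · rintro (a | i | j) h
    · obtain ⟨u, hu, hadj⟩ := hS.2 a (by simpa using h)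
      exact ⟨.inl u, by simpa using hu, by simpa using hadj⟩
    · fin_cases i <;> simp at h
    · exact ⟨.inr (.inl 0), by simp, addK23_adj_small_large⟩

section Counting

variable {T : Set (V ⊕ (Fin 2 ⊕ Fin 3))}

lemma large_notMem_of_small_mem (hT : IsIDSet (addK23 G v' t) T) {i : Fin 2}
    (hi : .inr (.inl i) ∈ T) (j : Fin 3) : .inr (.inr j) ∉ T :=
  fun hj => hT.1 _ hi _ hj addK23_adj_small_large

lemma small_mem_of_forall_large_notMem (hT : IsIDSet (addK23 G v' t) T)
    (hB : ∀ j : Fin 3, .inr (.inr j) ∉ T) (i : Fin 2) : .inr (.inl i) ∈ T := by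
  by_contra hi
  obtain ⟨a | i' | j, hu, hadj⟩ := hT.2 _ hi <;> simp at hadj
  exact hB j hu

lemma large_mem_of_forall_small_notMem (hT : IsIDSet (addK23 G v' t) T)
    (hA : ∀ i : Fin 2, .inr (.inl i) ∉ T) {j : Fin 3} (hj : j ≠ t) : .inr (.inr j) ∈ T := by
  by_contra hj'
  obtain ⟨a | i | j', hu, hadj⟩ := hT.2 _ hj' <;> simp at hadj
  · exact hj hadj.2
  · exact hA i hu

lemma two_le_ncard_preimage_inr (hT : IsIDSet (addK23 G v' t) T) :
    2 ≤ (Sum.inr ⁻¹' T).ncard := by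
  by_cases hA : ∃ i : Fin 2, .inr (.inl i) ∈ T
  · obtain ⟨i, hi⟩ := hA
    have hsub : Set.range Sum.inl ⊆ Sum.inr ⁻¹' T := by
      rintro _ ⟨i', rfl⟩
      exact small_mem_of_forall_large_notMem hT (large_notMem_of_small_mem hT hi) i'
    simpa [Set.ncard_range_of_injective Sum.inl_injective] using Set.ncard_le_ncard hsub
  · push Not at hA
    have hsub : Sum.inr '' {t}ᶜ ⊆ Sum.inr ⁻¹' T := by
      rintro _ ⟨j, hj, rfl⟩
      exact large_mem_of_forall_small_notMem hT hA hj
    have hcompl : ({t}ᶜ : Set (Fin 3)).ncard = 2 := by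
      rw [Set.ncard_compl, Set.ncard_singleton, Nat.card_eq_fintype_card, Fintype.card_fin]
    simpa [Set.ncard_image_of_injective _ Sum.inr_injective, hcompl]
      using Set.ncard_le_ncard hsub

lemma three_le_ncard_preimage_inr (hT : IsIDSet (addK23 G v' t) T) (ht : .inr (.inr t) ∈ T) :
    3 ≤ (Sum.inr ⁻¹' T).ncard := by
  have hA (i : Fin 2) : .inr (.inl i) ∉ T := fun hi => large_notMem_of_small_mem hT hi t ht
  have hsub : Set.range Sum.inr ⊆ Sum.inr ⁻¹' T := by
    rintro _ ⟨j, rfl⟩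
    by_cases hj : j = t
    · exact hj ▸ ht
    · exact large_mem_of_forall_small_notMem hT hA hj
  simpa [Set.ncard_range_of_injective Sum.inr_injective] using Set.ncard_le_ncard hsub

lemma exists_isIDSet_ncard_add_two_le [Finite V]
    (hT : IsIDSet (addK23 G v' t) T) : ∃ T' : Set V, IsIDSet G T' ∧ T'.ncard + 2 ≤ T.ncard := by
  set TV := Sum.inl ⁻¹' T
  have hsplit : TV.ncard + (Sum.inr ⁻¹' T).ncard = T.ncard :=
    ncard_preimage_inl_add_ncard_preimage_inr T
  have hindep : ∀ u ∈ TV, ∀ w ∈ TV, ¬ G.Adj u w := fun u hu w hw h =>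
    hT.1 _ hu _ hw (addK23_adj_inl_inl.mpr h)
  have hdom : ∀ w ∉ TV, (∃ u ∈ TV, G.Adj u w) ∨ (w = v' ∧ .inr (.inr t) ∈ T) := by
    intro w hw
    obtain ⟨a | i | j, hu, hadj⟩ := hT.2 _ hw <;> simp at hadj
    · exact .inl ⟨a, hu, hadj⟩
    · exact .inr ⟨hadj.1, hadj.2 ▸ hu⟩
  by_cases hv' : v' ∈ TV ∨ ∃ u ∈ TV, G.Adj u v'
  · refine ⟨TV, ⟨hindep, fun w hw => ?_⟩, by have := two_le_ncard_preimage_inr hT; omega⟩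
    rcases hdom w hw with h | ⟨rfl, -⟩
    · exact h
    · exact hv'.resolve_left hw
  · push Not at hv'
    obtain ⟨hv'TV, hnbr⟩ := hv'
    have ht : .inr (.inr t) ∈ T := ((hdom v' hv'TV).resolve_left (by simpa using hnbr)).2
    refine ⟨insert v' TV, ⟨?_, fun w hw => ?_⟩, ?_⟩
    · rintro u (rfl | hu) w (rfl | hw) h
      exacts [G.irrefl h, hnbr w hw h.symm, hnbr u hu h, hindep u hu w hw h]
    · rw [Set.mem_insert_iff, not_or] at hw
      obtain ⟨u, hu, h⟩ := (hdom w hw.2).resolve_right (fun h => hw.1 h.1)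
      exact ⟨u, Set.mem_insert_of_mem _ hu, h⟩
    · have := three_le_ncard_preimage_inr hT ht
      rw [Set.ncard_insert_of_notMem hv'TV]
      omega

end Counting

end Extension

instance : DecidableRel baseGraph.Adj := fun a b =>
  decidable_of_iff _ (fromRel_adj _ a b).symm

lemma isIDSet_baseGraph : IsIDSet baseGraph ({0, 1, 5} : Set (Fin 6)) := by
  refine ⟨?_, ?_⟩ <;> simp only [Set.mem_insert_iff, Set.mem_singleton_iff] <;> decide

lemma three_le_ncard_of_isIDSet_baseGraph {T : Set (Fin 6)} (hT : IsIDSet baseGraph T) :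
    3 ≤ T.ncard := by
  lift T to Finset (Fin 6) using T.toFinite
  rw [Set.ncard_coe_finset]
  revert T
  simp only [IsIDSet, Finset.mem_coe]
  decide

namespace FamilyBSet

variable {k : ℕ} {V : Type} {G : SimpleGraph V} {S : Set V}

lemma finite (h : FamilyBSet k G S) : Finite V := by
  induction h with
  | base => infer_instance
  | extend _ _ _ _ ih => infer_instance
  | iso e _ ih => exact Finite.of_equiv _ e.toEquiv

lemma isIDSet (h : FamilyBSet k G S) : IsIDSet G S := by
  induction h with
  | base => exact isIDSet_baseGraph
  | extend _ _ _ _ ih => exact isIDSet_addK23 ih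
  | iso e _ ih => exact ih.image_iso e

lemma ncard_eq (h : FamilyBSet k G S) : S.ncard = 2 * k + 1 := by
  induction h with
  | base => simp [Set.ncard_insert_of_notMem, Set.ncard_singleton]
  | extend hG _ _ _ ih =>
    have := hG.finite
    rw [Set.ncard_union_eq (by simp [Set.disjoint_left]),
      Set.ncard_image_of_injective _ Sum.inl_injective, Set.ncard_pair (by simp), ih]
    ring
  | iso e _ ih => rw [Set.ncard_image_of_injective _ e.injective, ih]

lemma le_ncard (h : FamilyBSet k G S) {T : Set V} (hT : IsIDSet G T) : 2 * k + 1 ≤ T.ncard := by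
  induction h with
  | base => exact three_le_ncard_of_isIDSet_baseGraph hT
  | extend hG _ _ _ ih =>
    have := hG.finite
    obtain ⟨T', hT', hcard⟩ := exists_isIDSet_ncard_add_two_le hT
    have := ih hT'
    omega
  | iso e _ ih =>
    simpa [Set.ncard_image_of_injective _ e.symm.injective] using ih (hT.image_iso e.symm)

end FamilyBSet

theorem statement10_general {V : Type} (G : SimpleGraph V) (k : ℕ)
    (S : Set V) (hS : FamilyBSet k G S) :
    IsIDSet G S ∧ S.ncard = 2 * k + 1 ∧ iNum G = 2 * k + 1 :=
  ⟨hS.isIDSet, hS.ncard_eq, hS.ncard_eq ▸ iNum_eq_ncard_of_forall_le hS.isIDSet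
    fun _ hT => hS.ncard_eq ▸ hS.le_ncard hT⟩

/-- If `G ∈ 𝓑` is constructed from the base graph by `k − 1`
applications of `O₁` (`k ≥ 1`) and `S` is the set consisting of the root of `G` together
with, for each of the `k` copies of `K_{2,3}` in `G`, the two vertices of the partite set
of size 2 of that copy, then `S` is an independent dominating set of `G` of minimum
cardinality `2k + 1 = i(G)`. -/
theorem statement10 {V : Type} (G : SimpleGraph V) (k : ℕ) (hk : 1 ≤ k)
    (S : Set V) (hS : FamilyBSet k G S) :
    IsIDSet G S ∧ S.ncard = 2 * k + 1 ∧ iNum G = 2 * k + 1 :=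
  statement10_general G k S hS

end PaperIndepDom
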